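/- Let ε > 0, k ∈ ℤ, λ ≥ 1, ζ ∈ ℝ, and γ = √(ε²k² + λ⟨k⟩^{2/3} + iζ) with Re(γ) > 0. Then the multiplier n(y) = e^{-ε|k| y} · (1 − e^{-(γ-ε|k|)y})/(γ − ε|k|) satisfies ‖n‖_{L²(0,1)} ≤ C λ^{-1/2} ⟨k⟩^{-1/3} for a universal constant C. -/

import Mathlib

/-!
Write `a = ε|k|`, `L = λ⟨k⟩^{2/3}` and `z = γ - a`, so that `n(y) = e^{-ay}(1 - e^{-zy})/z` with
`Re z ≥ 0`. Since `|1 - e^{-w}| ≤ 2 min(1, |w|)` for `Re w ≥ 0`, we get `|z| |n(y)| ≤ 2` and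
`a |n(y)| ≤ 2 ay e^{-ay} ≤ 2`, i.e. `|n(y)| ≤ 4 / (|z| + a)`. On the other hand
`(Re γ)² ≥ Re γ² = a² + L`, so `|z| + a ≥ Re γ ≥ √L`. Hence `|n| ≤ 4 L^{-1/2}` on `(0,1)`, and the
interval has length one.
-/

open MeasureTheory

/-- Japanese bracket `⟨k⟩ = (1+k²)^(1/2)` for `k : ℤ`. -/
noncomputable def jap (k : ℤ) : ℝ := Real.sqrt (1 + (k : ℝ) ^ 2)

namespace Complex

theorem norm_one_sub_exp_neg_le_two {w : ℂ} (hw : 0 ≤ w.re) : ‖1 - exp (-w)‖ ≤ 2 := by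
  have hexp : ‖exp (-w)‖ ≤ 1 := by
    rw [norm_exp, Real.exp_le_one_iff, neg_re]
    linarith
  calc ‖1 - exp (-w)‖ ≤ ‖(1 : ℂ)‖ + ‖exp (-w)‖ := norm_sub_le _ _
    _ ≤ 2 := by rw [norm_one]; linarith

theorem norm_one_sub_exp_neg_le_two_mul_norm {w : ℂ} (hw : 0 ≤ w.re) :
    ‖1 - exp (-w)‖ ≤ 2 * ‖w‖ := by
  rcases le_or_gt ‖w‖ 1 with hsmall | hlarge
  · rw [norm_sub_rev, ← norm_neg w]
    exact norm_exp_sub_one_le (by rwa [norm_neg])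
  · linarith [norm_one_sub_exp_neg_le_two hw]

theorem sqrt_re_sq_le_re {γ : ℂ} (hγ : 0 ≤ γ.re) : √((γ ^ 2).re) ≤ γ.re := by
  refine Real.sqrt_le_iff.2 ⟨hγ, ?_⟩
  rw [sq, mul_re, ← sq, ← sq]
  nlinarith [sq_nonneg γ.im]

end Complex

open Complex

theorem norm_exp_mul_one_sub_exp_div_mul_le {a y : ℝ} {z : ℂ} (ha : 0 ≤ a) (hy : 0 ≤ y)
    (hz : 0 ≤ z.re) :
    ‖exp (-(a : ℂ) * y) * ((1 - exp (-z * y)) / z)‖ * (‖z‖ + a) ≤ 4 := by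
  rcases eq_or_ne z 0 with rfl | hz0
  · simp
  have hzy : 0 ≤ (z * y).re := by simpa using mul_nonneg hz hy
  have hdecay : ‖exp (-(a : ℂ) * y)‖ = Real.exp (-(a * y)) := by
    rw [norm_exp]; simp
  set E := ‖1 - exp (-(z * y))‖
  have hnorm : ‖exp (-(a : ℂ) * y) * ((1 - exp (-z * y)) / z)‖ =
      Real.exp (-(a * y)) * E / ‖z‖ := by
    rw [norm_mul, norm_div, hdecay, neg_mul, mul_div_assoc]
  have hE : E ≤ 2 * (‖z‖ * y) := by
    simpa [norm_mul, abs_of_nonneg hy] using norm_one_sub_exp_neg_le_two_mul_norm hzy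
  have hz' : 0 < ‖z‖ := norm_pos_iff.2 hz0
  have hdecay_le : Real.exp (-(a * y)) ≤ 1 := Real.exp_le_one_iff.2 (by nlinarith)
  have hpeak : a * y * Real.exp (-(a * y)) ≤ 1 :=
    (Real.mul_exp_neg_le_exp_neg_one _).trans (Real.exp_le_one_iff.2 (by norm_num))
  rw [hnorm]
  calc Real.exp (-(a * y)) * E / ‖z‖ * (‖z‖ + a)
      = Real.exp (-(a * y)) * E + a * Real.exp (-(a * y)) * E / ‖z‖ := by field_simp
    _ ≤ 1 * 2 + a * Real.exp (-(a * y)) * (2 * (‖z‖ * y)) / ‖z‖ := by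
        gcongr
        exact norm_one_sub_exp_neg_le_two hzy
    _ = 2 + 2 * (a * y * Real.exp (-(a * y))) := by field_simp
    _ ≤ 4 := by linarith

theorem sqrt_setIntegral_sq_le {α : Type*} [MeasurableSpace α] {μ : Measure α} {s : Set α}
    {f : α → ℝ} {M : ℝ} (hs : μ s ≤ 1) (hM : 0 ≤ M) (hf : ∀ x ∈ s, |f x| ≤ M) :
    √(∫ x in s, f x ^ 2 ∂μ) ≤ M := by
  refine Real.sqrt_le_iff.2 ⟨hM, ?_⟩
  have hsq : ∀ x ∈ s, ‖f x ^ 2‖ ≤ M ^ 2 := fun x hx => by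
    rw [Real.norm_eq_abs, abs_pow]
    exact pow_le_pow_left₀ (abs_nonneg _) (hf x hx) 2
  have hμ : μ.real s ≤ 1 := ENNReal.toReal_le_of_le_ofReal zero_le_one (by simpa using hs)
  calc ∫ x in s, f x ^ 2 ∂μ ≤ ‖∫ x in s, f x ^ 2 ∂μ‖ := Real.le_norm_self _
    _ ≤ M ^ 2 * μ.real s :=
        norm_setIntegral_le_of_norm_le_const (hs.trans_lt ENNReal.one_lt_top) hsq
    _ ≤ M ^ 2 := mul_le_of_le_one_right (sq_nonneg M) hμ

theorem inv_sqrt_mul_rpow_two_thirds {lam J : ℝ} (hlam : 0 ≤ lam) (hJ : 0 ≤ J) :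
    (√(lam * J ^ ((2 : ℝ) / 3)))⁻¹ = lam ^ (-(1 : ℝ) / 2) * J ^ (-(1 : ℝ) / 3) := by
  rw [Real.sqrt_eq_rpow, ← Real.rpow_neg (by positivity), Real.mul_rpow hlam (by positivity),
    ← Real.rpow_mul hJ]
  norm_num

theorem jap_pos (k : ℤ) : 0 < jap k := Real.sqrt_pos.2 (by positivity)

/-- The multiplier `n(y) = e^{-ε|k|y} (1 - e^{-(γ-ε|k|)y})/(γ-ε|k|)` satisfies
`‖n‖_{L²(0,1)} ≤ C λ^(-1/2) ⟨k⟩^(-1/3)` for a universal constant `C`. -/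
theorem stokes_multiplier_L2_interval :
    ∃ C : ℝ, 0 < C ∧
    ∀ (ε lam ζ : ℝ) (k : ℤ) (γ : ℂ), 0 < ε → 1 ≤ lam →
      γ ^ 2 = Complex.ofReal (ε ^ 2 * (k : ℝ) ^ 2 + lam * jap k ^ ((2 : ℝ) / 3))
                + Complex.I * Complex.ofReal ζ →
      0 < γ.re →
      Real.sqrt (∫ y in Set.Ioo (0 : ℝ) 1,
          (‖Complex.exp (-(ε * |(k : ℝ)| : ℝ) * y) *
            ((1 - Complex.exp (-(γ - (ε * |(k : ℝ)| : ℝ)) * y)) /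
              (γ - (ε * |(k : ℝ)| : ℝ)))‖) ^ 2) ≤
        C * lam ^ (-(1 : ℝ) / 2) * jap k ^ (-(1 : ℝ) / 3) := by
  refine ⟨4, by norm_num, fun ε lam ζ k γ hε hlam hγ hγre => ?_⟩
  set a := ε * |(k : ℝ)|
  set L := lam * jap k ^ ((2 : ℝ) / 3)
  have ha : 0 ≤ a := by positivity
  have hL : 0 < L := mul_pos (by linarith) (by have := jap_pos k; positivity)
  have hγ_re_sq : (γ ^ 2).re = a ^ 2 + L := by
    rw [hγ, add_re, ofReal_re, re_mul_ofReal, I_re, zero_mul, add_zero, mul_pow, sq_abs]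
  have hγ_re_ge : √(a ^ 2 + L) ≤ γ.re := hγ_re_sq ▸ Complex.sqrt_re_sq_le_re hγre.le
  have hz : 0 ≤ (γ - a).re := by
    have : a ≤ √(a ^ 2 + L) := Real.le_sqrt_of_sq_le (by linarith)
    simpa using this.trans hγ_re_ge
  have hsqrt_le : √L ≤ ‖γ - a‖ + a :=
    calc √L ≤ √(a ^ 2 + L) := Real.sqrt_le_sqrt (by linarith [sq_nonneg a])
      _ ≤ γ.re := hγ_re_ge
      _ = (γ - a).re + a := by simp
      _ ≤ ‖γ - a‖ + a := by gcongr; exact Complex.re_le_norm _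
  have hpointwise : ∀ y ∈ Set.Ioo (0 : ℝ) 1,
      |‖exp (-(a : ℂ) * y) * ((1 - exp (-(γ - a) * y)) / (γ - a))‖| ≤ 4 / √L := by
    rintro y ⟨hy, -⟩
    rw [abs_norm, le_div_iff₀ (Real.sqrt_pos.2 hL)]
    exact (mul_le_mul_of_nonneg_left hsqrt_le (norm_nonneg _)).trans
      (norm_exp_mul_one_sub_exp_div_mul_le ha hy.le hz)
  calc _ ≤ 4 / √L := sqrt_setIntegral_sq_le (by simp) (by positivity) hpointwise
    _ = _ := by
      rw [div_eq_mul_inv, inv_sqrt_mul_rpow_two_thirds (by linarith) (jap_pos k).le, mul_assoc]
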